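/- Let z ∈ 𝒳, γ > 0, and w₁, w₂ ∈ ℝ^{d₁}. Let x₁ be the unique minimizer over 𝒳 of x ↦ ⟨w₁, x⟩ + h(x) + (1/γ)D_ψ(x, z) and x₂ the unique minimizer over 𝒳 of x ↦ ⟨w₂, x⟩ + h(x) + (1/γ)D_ψ(x, z), and set G₁ = (z − x₁)/γ and G₂ = (z − x₂)/γ. Then ‖G₁ − G₂‖ ≤ (1/ρ)‖w₁ − w₂‖. -/

import Mathlib

open scoped RealInnerProductSpace

variable {d₁ : ℕ}

local notation "E₁" => EuclideanSpace ℝ (Fin d₁)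

/-!
Both objectives are `h + D_ψ(·, z)/γ` plus a linear term, hence `(ρ/γ)`-strongly convex, so each
grows quadratically away from its minimizer over `𝒳`. Adding the two growth inequalities (at `x₁`
towards `x₂` and vice versa) cancels `h` and `D_ψ`, leaving
`(ρ/γ) ‖x₁ - x₂‖² ≤ ⟪w₁ - w₂, x₂ - x₁⟫ ≤ ‖w₁ - w₂‖ ‖x₁ - x₂‖`, and `G₁ - G₂ = (x₂ - x₁)/γ`.
-/

open Set Filter Topology

section StrongConvexity

variable {E : Type*} [NormedAddCommGroup E] [InnerProductSpace ℝ E] {s t : Set E} {m : ℝ}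
  {f g : E → ℝ}

/-- The Bregman divergence `D_ψ(x, z)`, with `g` standing for `∇ψ(z)`. -/
def bregmanDiv (ψ : E → ℝ) (g z x : E) : ℝ := ψ x - ψ z - ⟪g, x - z⟫

lemma StrongConvexOn.subset (hf : StrongConvexOn t m f) (hst : s ⊆ t) (hs : Convex ℝ s) :
    StrongConvexOn s m f :=
  ⟨hs, fun _ hx _ hy => hf.2 (hst hx) (hst hy)⟩

lemma ConvexOn.add_strongConvexOn (hf : ConvexOn ℝ s f) (hg : StrongConvexOn s m g) :
    StrongConvexOn s m (f + g) := by
  have := (uniformConvexOn_zero.2 hf).add hg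
  rwa [zero_add] at this

lemma StrongConvexOn.const_smul {c : ℝ} (hf : StrongConvexOn s m f) (hc : 0 ≤ c) :
    StrongConvexOn s (c * m) (c • f) := by
  refine ⟨hf.1, fun x hx y hy a b ha hb hab => ?_⟩
  have := mul_le_mul_of_nonneg_left (hf.2 hx hy ha hb hab) hc
  simp only [Pi.smul_apply, smul_eq_mul] at this ⊢
  linarith

lemma StrongConvexOn.bregmanDiv {ψ : E → ℝ} (hψ : StrongConvexOn s m ψ) (g z : E) :
    StrongConvexOn s m (bregmanDiv ψ g z) := by
  refine ⟨hψ.1, fun x hx y hy a b ha hb hab => ?_⟩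
  have hlin : ⟪g, a • x + b • y - z⟫ = a * ⟪g, x - z⟫ + b * ⟪g, y - z⟫ := by
    rw [show a • x + b • y - z = a • (x - z) + b • (y - z) by
      linear_combination (norm := module) hab • z]
    rw [inner_add_right, real_inner_smul_right, real_inner_smul_right]
  have := hψ.2 hx hy ha hb hab
  simp only [_root_.bregmanDiv, smul_eq_mul, hlin] at this ⊢
  linear_combination this + ψ z * hab

lemma StrongConvexOn.quadratic_growth_of_isMinOn {a b : E} (hf : StrongConvexOn s m f)
    (hmin : IsMinOn f s a) (ha : a ∈ s) (hb : b ∈ s) :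
    f a + m / 2 * ‖a - b‖ ^ 2 ≤ f b := by
  set c := m / 2 * ‖a - b‖ ^ 2
  -- compare `f a` with `f` at `(1 - t) • a + t • b`, divide by `t`, and let `t → 0`
  have hstep : ∀ t ∈ Ioo (0 : ℝ) 1, (1 - t) * c ≤ f b - f a := by
    rintro t ⟨ht0, ht1⟩
    have hconv := hf.2 ha hb (sub_nonneg.2 ht1.le) ht0.le (sub_add_cancel 1 t)
    have hle := isMinOn_iff.1 hmin _ (hf.1 ha hb (sub_nonneg.2 ht1.le) ht0.le (sub_add_cancel 1 t))
    rw [smul_eq_mul, smul_eq_mul] at hconv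
    refine le_of_mul_le_mul_left ?_ ht0
    linear_combination hle + hconv
  have hlim : Tendsto (fun t : ℝ => (1 - t) * c) (𝓝[>] 0) (𝓝 c) := by
    refine tendsto_nhdsWithin_of_tendsto_nhds ?_
    have hcont : Continuous fun t : ℝ => (1 - t) * c := by fun_prop
    simpa using hcont.tendsto 0
  have := le_of_tendsto hlim (eventually_of_mem (Ioo_mem_nhdsGT one_pos) hstep)
  linarith

lemma StrongConvexOn.mul_norm_sub_le_of_isMinOn_inner_add {a b w₁ w₂ : E}
    (hf : StrongConvexOn s m f) (ha : a ∈ s) (hb : b ∈ s)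
    (ha_min : IsMinOn (fun x => ⟪w₁, x⟫ + f x) s a)
    (hb_min : IsMinOn (fun x => ⟪w₂, x⟫ + f x) s b) :
    m * ‖a - b‖ ≤ ‖w₁ - w₂‖ := by
  have htilt (w : E) : StrongConvexOn s m (fun x => ⟪w, x⟫ + f x) :=
    ((innerₗ E w).convexOn hf.1).add_strongConvexOn hf
  have hgrowth_a := (htilt w₁).quadratic_growth_of_isMinOn ha_min ha hb
  have hgrowth_b := (htilt w₂).quadratic_growth_of_isMinOn hb_min hb ha
  rw [norm_sub_rev b a] at hgrowth_b
  have hsum : m * ‖a - b‖ ^ 2 ≤ ⟪w₁ - w₂, b - a⟫ := by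
    simp only [inner_sub_left, inner_sub_right]
    linarith
  have hcs : ⟪w₁ - w₂, b - a⟫ ≤ ‖w₁ - w₂‖ * ‖a - b‖ := by
    simpa only [norm_sub_rev b a] using real_inner_le_norm (w₁ - w₂) (b - a)
  rcases (norm_nonneg (a - b)).eq_or_lt with hab | hab
  · rw [← hab, mul_zero]
    exact norm_nonneg _
  · refine le_of_mul_le_mul_right ?_ hab
    nlinarith

end StrongConvexity

theorem mirror_descent_generalized_gradient_difference_general
    (ρ : ℝ) (hρ : 0 < ρ)
    (ψ : E₁ → ℝ) (gψ : E₁ → E₁)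
    (hψsc : StrongConvexOn Set.univ ρ ψ)
    (X : Set E₁) (hXcv : Convex ℝ X)
    (h : E₁ → ℝ) (hh : ConvexOn ℝ Set.univ h)
    (z : E₁) (γ : ℝ) (hγ : 0 < γ) (w₁ w₂ : E₁)
    (x₁ : E₁) (hx₁ : x₁ ∈ X)
    (hx₁min : ∀ u ∈ X,
      ⟪w₁, x₁⟫ + h x₁ + 1 / γ * (ψ x₁ - ψ z - ⟪gψ z, x₁ - z⟫) ≤
        ⟪w₁, u⟫ + h u + 1 / γ * (ψ u - ψ z - ⟪gψ z, u - z⟫))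
    (x₂ : E₁) (hx₂ : x₂ ∈ X)
    (hx₂min : ∀ u ∈ X,
      ⟪w₂, x₂⟫ + h x₂ + 1 / γ * (ψ x₂ - ψ z - ⟪gψ z, x₂ - z⟫) ≤
        ⟪w₂, u⟫ + h u + 1 / γ * (ψ u - ψ z - ⟪gψ z, u - z⟫)) :
    ‖(1 / γ) • (z - x₁) - (1 / γ) • (z - x₂)‖ ≤ 1 / ρ * ‖w₁ - w₂‖ := by
  have hsc : StrongConvexOn X (1 / γ * ρ) (h + (1 / γ) • bregmanDiv ψ (gψ z) z) :=
    (hh.subset (subset_univ X) hXcv).add_strongConvexOn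
      (((hψsc.subset (subset_univ X) hXcv).bregmanDiv (gψ z) z).const_smul (by positivity))
  have hstab := hsc.mul_norm_sub_le_of_isMinOn_inner_add hx₁ hx₂
    (isMinOn_iff.2 fun u hu => (add_assoc _ _ _).symm.trans_le <| (hx₁min u hu).trans_eq <|
      add_assoc _ _ _)
    (isMinOn_iff.2 fun u hu => (add_assoc _ _ _).symm.trans_le <| (hx₂min u hu).trans_eq <|
      add_assoc _ _ _)
  rw [← smul_sub, sub_sub_sub_cancel_left, norm_smul, Real.norm_of_nonneg (by positivity),
    norm_sub_rev]
  calc 1 / γ * ‖x₁ - x₂‖ = 1 / ρ * (1 / γ * ρ * ‖x₁ - x₂‖) := by field_simp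
    _ ≤ 1 / ρ * ‖w₁ - w₂‖ := by gcongr

/-- If `x₁`, `x₂` are the minimizers over `𝒳` of the mirror-descent objectives with linear
parts `w₁`, `w₂` respectively, and `Gᵢ = (z − xᵢ)/γ`, then `‖G₁ − G₂‖ ≤ (1/ρ)‖w₁ − w₂‖`. -/
theorem mirror_descent_generalized_gradient_difference
    (hd₁ : 0 < d₁) (ρ : ℝ) (hρ : 0 < ρ)
    (ψ : E₁ → ℝ) (gψ : E₁ → E₁)
    (hψdiff : ∀ x, HasGradientAt ψ (gψ x) x)
    (hψsc : StrongConvexOn Set.univ ρ ψ)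
    (X : Set E₁) (hXne : X.Nonempty) (hXcl : IsClosed X) (hXcv : Convex ℝ X)
    (h : E₁ → ℝ) (hh : ConvexOn ℝ Set.univ h)
    (z : E₁) (hz : z ∈ X) (γ : ℝ) (hγ : 0 < γ) (w₁ w₂ : E₁)
    (x₁ : E₁) (hx₁ : x₁ ∈ X)
    (hx₁min : ∀ u ∈ X,
      ⟪w₁, x₁⟫ + h x₁ + 1 / γ * (ψ x₁ - ψ z - ⟪gψ z, x₁ - z⟫) ≤
        ⟪w₁, u⟫ + h u + 1 / γ * (ψ u - ψ z - ⟪gψ z, u - z⟫))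
    (x₂ : E₁) (hx₂ : x₂ ∈ X)
    (hx₂min : ∀ u ∈ X,
      ⟪w₂, x₂⟫ + h x₂ + 1 / γ * (ψ x₂ - ψ z - ⟪gψ z, x₂ - z⟫) ≤
        ⟪w₂, u⟫ + h u + 1 / γ * (ψ u - ψ z - ⟪gψ z, u - z⟫)) :
    ‖(1 / γ) • (z - x₁) - (1 / γ) • (z - x₂)‖ ≤ 1 / ρ * ‖w₁ - w₂‖ :=
  mirror_descent_generalized_gradient_difference_general ρ hρ ψ gψ hψsc X hXcv h hh z γ hγ w₁ w₂ x₁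
    hx₁ hx₁min x₂ hx₂ hx₂min
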